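/- Let H(nx) be the first hitting time of nx ∈ Z^2 by the simple symmetric random walk on Z^2 and let λ > 0. Suppose that for some finite γ_0 > 0 the quantity A = inf_{γ>0}(λγ + γ I(x/γ)) is attained at γ_0, where I is the Cramér function of the walk. Then for any ν > (γ_0/λ)(λ + I(x/γ_0)), limsup_{n→∞} (1/n) log E[e^{−λH(nx)}; H(nx) > νn] < −A; consequently E[e^{−λH(nx)}; H(nx) > νn] / E[e^{−λH(nx)}] → 0 as n → ∞, provided liminf_n (1/n) log E[e^{−λH(nx)}] ≥ −A. -/

import Mathlib

open Filter
open scoped ENNReal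

/-- `srwProb n x` is the probability that the simple symmetric random walk on ℤ²,
started at the origin, is at `x` at time `n`. -/
noncomputable def srwProb : ℕ → ℤ × ℤ → ℝ
  | 0, x => if x = 0 then 1 else 0
  | n + 1, x =>
      (srwProb n (x + (1, 0)) + srwProb n (x - (1, 0)) +
        srwProb n (x + (0, 1)) + srwProb n (x - (0, 1))) / 4

/-- `srwFirstHit x n = P(H(x) = n)`, the first-passage probability, characterized by
the renewal identity `srwProb n x = ∑_{k ≤ n} srwFirstHit x k * srwProb (n-k) 0`. -/
noncomputable def srwFirstHit (x : ℤ × ℤ) : ℕ → ℝ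
  | n => srwProb n x -
      ∑ k ∈ (Finset.range n).attach, srwFirstHit x k.1 * srwProb (n - k.1) (0, 0)
  decreasing_by exact Finset.mem_range.mp k.2

/-- `E[e^{-λ H(z)}]` (with `e^{-λ∞} = 0`). -/
noncomputable def hitLaplace (lam : ℝ) (z : ℤ × ℤ) : ℝ :=
  ∑' k : ℕ, Real.exp (-lam * k) * srwFirstHit z k

/-- `E[e^{-λ H(z)}; H(z) > ν n]`. -/
noncomputable def hitLaplaceTail (lam ν : ℝ) (n : ℕ) (z : ℤ × ℤ) : ℝ :=
  ∑' k : ℕ, if ν * n < (k : ℝ) then Real.exp (-lam * k) * srwFirstHit z k else 0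

/-- The log-Laplace transform of a step of the simple random walk on ℤ². -/
noncomputable def lmgf (y : ℝ × ℝ) : ℝ := Real.log ((Real.cosh y.1 + Real.cosh y.2) / 2)

/-- The Cramér rate function (Legendre transform of `lmgf`), valued in `[0,∞]`. -/
noncomputable def cramerI (z : ℝ × ℝ) : ℝ≥0∞ :=
  ⨆ y : ℝ × ℝ, ENNReal.ofReal (z.1 * y.1 + z.2 * y.2 - lmgf y)

/-!
Every term of the tail sum has `H(nx) > νn`, so the tail is at most `e^{-λνn} / (1 - e^{-λ})`,
while the choice of `ν` gives `λν > λγ₀ + γ₀ I(x/γ₀) = A`. Hence the tail decays at a rate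
`c₁ ∈ (-λν, -A)`, and the ratio is squeezed by `e^{(c₁ - c₂) n}` for any `c₂ ∈ (c₁, -A)` below
the `liminf` of the full transform.

For the logarithms to mean anything (and the `limsup` not to be a junk value) the tail must
also be at least `e^{-Cn}`: the walk can spend `2 ⌈ν⌉₊ n` steps near the origin without touching
`nx` and then go straight to `nx`. To use paths, the recursively defined first-passage
probabilities are identified, through the renewal identity, with those of the walk killed at
its target.
-/

open Real Topology

def nbrSum (f : ℤ × ℤ → ℝ) (y : ℤ × ℤ) : ℝ :=
  f (y + (1, 0)) + f (y - (1, 0)) + f (y + (0, 1)) + f (y - (0, 1))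

def IsNbr (y y' : ℤ × ℤ) : Prop :=
  y' = y + (1, 0) ∨ y' = y - (1, 0) ∨ y' = y + (0, 1) ∨ y' = y - (0, 1)

def l1Norm (y : ℤ × ℤ) : ℕ := y.1.natAbs + y.2.natAbs

section NbrSum

variable {f g : ℤ × ℤ → ℝ} {y : ℤ × ℤ}

lemma nbrSum_nonneg (hf : ∀ y, 0 ≤ f y) : 0 ≤ nbrSum f y := by
  unfold nbrSum
  linarith [hf (y + (1, 0)), hf (y - (1, 0)), hf (y + (0, 1)), hf (y - (0, 1))]

lemma nbrSum_le_four (hf : ∀ y, f y ≤ 1) : nbrSum f y ≤ 4 := by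
  unfold nbrSum
  linarith [hf (y + (1, 0)), hf (y - (1, 0)), hf (y + (0, 1)), hf (y - (0, 1))]

lemma le_nbrSum (hf : ∀ y, 0 ≤ f y) {y' : ℤ × ℤ} (h : IsNbr y y') : f y' ≤ nbrSum f y := by
  unfold nbrSum
  rcases h with rfl | rfl | rfl | rfl <;>
    linarith [hf (y + (1, 0)), hf (y - (1, 0)), hf (y + (0, 1)), hf (y - (0, 1))]

lemma nbrSum_add : nbrSum (fun y => f y + g y) y = nbrSum f y + nbrSum g y := by
  unfold nbrSum; ring

lemma nbrSum_const_mul (c : ℝ) : nbrSum (fun y => c * f y) y = c * nbrSum f y := by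
  unfold nbrSum; ring

lemma nbrSum_sum {ι : Type*} (s : Finset ι) (F : ι → ℤ × ℤ → ℝ) :
    nbrSum (fun y => ∑ i ∈ s, F i y) y = ∑ i ∈ s, nbrSum (F i) y := by
  simp only [nbrSum, Finset.sum_add_distrib]

lemma nbrSum_comp_sub (z : ℤ × ℤ) : nbrSum (fun y => f (y - z)) y = nbrSum f (y - z) := by
  simp only [nbrSum, add_sub_right_comm, sub_right_comm]

end NbrSum

lemma l1Norm_eq_zero {y : ℤ × ℤ} : l1Norm y = 0 ↔ y = 0 := by
  simp [l1Norm, Prod.ext_iff]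

lemma l1Norm_nsmul (n : ℕ) (y : ℤ × ℤ) : l1Norm (n • y) = n * l1Norm y := by
  simp [l1Norm, Int.natAbs_mul, mul_add]

lemma exists_nbr_l1Norm_sub_eq {z y : ℤ × ℤ} {d : ℕ} (h : l1Norm (z - y) = d + 1) :
    ∃ y', IsNbr y' y ∧ l1Norm (z - y') = d := by
  simp only [l1Norm, Prod.fst_sub, Prod.snd_sub] at h
  by_cases h1 : y.1 < z.1
  · refine ⟨y + (1, 0), Or.inr (Or.inl (add_sub_cancel_right y _).symm), ?_⟩
    simp only [l1Norm, Prod.fst_sub, Prod.snd_sub, Prod.fst_add, Prod.snd_add]; omega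
  by_cases h2 : z.1 < y.1
  · refine ⟨y - (1, 0), Or.inl (sub_add_cancel y _).symm, ?_⟩
    simp only [l1Norm, Prod.fst_sub, Prod.snd_sub]; omega
  by_cases h3 : y.2 < z.2
  · refine ⟨y + (0, 1), Or.inr (Or.inr (Or.inr (add_sub_cancel_right y _).symm)), ?_⟩
    simp only [l1Norm, Prod.fst_sub, Prod.snd_sub, Prod.fst_add, Prod.snd_add]; omega
  · refine ⟨y - (0, 1), Or.inr (Or.inr (Or.inl (sub_add_cancel y _).symm)), ?_⟩
    simp only [l1Norm, Prod.fst_sub, Prod.snd_sub]; omega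

lemma srwProb_succ (n : ℕ) (y : ℤ × ℤ) : srwProb (n + 1) y = nbrSum (srwProb n) y / 4 := rfl

/-- `srwAvoid z n y = P(S_n = y, S_k ≠ z for 0 < k ≤ n)`, and `srwHit z n = P(H(z) = n)`. -/
noncomputable def srwAvoid (z : ℤ × ℤ) : ℕ → ℤ × ℤ → ℝ
  | 0, y => if y = 0 then 1 else 0
  | n + 1, y => if y = z then 0 else nbrSum (srwAvoid z n) y / 4

noncomputable def srwHit (z : ℤ × ℤ) : ℕ → ℝ
  | 0 => 0
  | n + 1 => nbrSum (srwAvoid z n) z / 4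

section Avoid

variable (z : ℤ × ℤ)

lemma srwAvoid_nonneg (n : ℕ) (y : ℤ × ℤ) : 0 ≤ srwAvoid z n y := by
  induction n generalizing y with
  | zero => unfold srwAvoid; positivity
  | succ n ih =>
    unfold srwAvoid
    split_ifs
    · rfl
    · exact div_nonneg (nbrSum_nonneg ih) (by norm_num)

lemma srwAvoid_le_one (n : ℕ) (y : ℤ × ℤ) : srwAvoid z n y ≤ 1 := by
  induction n generalizing y with
  | zero => unfold srwAvoid; split_ifs <;> norm_num
  | succ n ih =>
    unfold srwAvoid
    split_ifs
    · norm_num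
    · linarith [nbrSum_le_four (y := y) ih]

lemma srwHit_nonneg (n : ℕ) : 0 ≤ srwHit z n := by
  cases n with
  | zero => rfl
  | succ n => exact div_nonneg (nbrSum_nonneg (srwAvoid_nonneg z n)) (by norm_num)

lemma srwHit_le_one (n : ℕ) : srwHit z n ≤ 1 := by
  cases n with
  | zero => simp [srwHit]
  | succ n =>
    show nbrSum (srwAvoid z n) z / 4 ≤ 1
    linarith [nbrSum_le_four (y := z) (srwAvoid_le_one z n)]

lemma srwAvoid_self {z : ℤ × ℤ} (hz : z ≠ 0) (n : ℕ) : srwAvoid z n z = 0 := by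
  cases n <;> simp [srwAvoid, hz]

/-- One step of the walk either avoids `z` or enters it for the first time. -/
lemma nbrSum_srwAvoid_div_four (n : ℕ) (y : ℤ × ℤ) :
    nbrSum (srwAvoid z n) y / 4 = srwAvoid z (n + 1) y + srwHit z (n + 1) * srwProb 0 (y - z) := by
  by_cases hy : y = z
  · subst hy; simp [srwAvoid, srwHit, srwProb]
  · simp [srwAvoid, srwProb, hy, sub_eq_zero]

theorem srwProb_eq_srwAvoid_add_sum (n : ℕ) (y : ℤ × ℤ) :
    srwProb n y = srwAvoid z n y +
      ∑ k ∈ Finset.range (n + 1), srwHit z k * srwProb (n - k) (y - z) := by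
  induction n generalizing y with
  | zero => simp [srwProb, srwAvoid, srwHit]
  | succ n ih =>
    have hstep : ∀ k ∈ Finset.range (n + 1), srwHit z k * srwProb (n + 1 - k) (y - z) =
        srwHit z k * nbrSum (srwProb (n - k)) (y - z) / 4 := fun k hk => by
      rw [Nat.sub_add_comm (Finset.mem_range_succ_iff.mp hk), srwProb_succ, mul_div_assoc]
    rw [Finset.sum_range_succ, Finset.sum_congr rfl hstep, Nat.sub_self, add_left_comm,
      ← nbrSum_srwAvoid_div_four, srwProb_succ, funext ih, nbrSum_add, nbrSum_sum]
    simp only [nbrSum_const_mul, nbrSum_comp_sub]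
    rw [add_div, Finset.sum_div, add_comm]

end Avoid

theorem srwFirstHit_eq_srwHit {z : ℤ × ℤ} (hz : z ≠ 0) (n : ℕ) : srwFirstHit z n = srwHit z n := by
  induction n using Nat.strong_induction_on with
  | _ n ih =>
    have hsum : ∑ k ∈ (Finset.range n).attach, srwFirstHit z k.1 * srwProb (n - k.1) (0, 0) =
        ∑ k ∈ Finset.range n, srwHit z k * srwProb (n - k) 0 := by
      rw [← Finset.sum_attach (Finset.range n) (fun k => srwHit z k * srwProb (n - k) 0)]
      exact Finset.sum_congr rfl fun k _ => by rw [ih k.1 (Finset.mem_range.mp k.2)]; rfl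
    have hrenewal := srwProb_eq_srwAvoid_add_sum z n z
    rw [srwAvoid_self hz, Finset.sum_range_succ, sub_self, Nat.sub_self] at hrenewal
    rw [srwFirstHit, hsum, hrenewal]
    simp [srwProb]

section LowerBound

variable {z : ℤ × ℤ}

lemma srwAvoid_succ_ge {y y' : ℤ × ℤ} (hy' : y' ≠ z) (h : IsNbr y' y) (m : ℕ) :
    srwAvoid z m y / 4 ≤ srwAvoid z (m + 1) y' := by
  rw [srwAvoid, if_neg hy']
  exact div_le_div_of_nonneg_right (le_nbrSum (srwAvoid_nonneg z m) h) (by norm_num)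

lemma srwHit_succ_ge {y : ℤ × ℤ} (h : IsNbr z y) (m : ℕ) :
    srwAvoid z m y / 4 ≤ srwHit z (m + 1) :=
  div_le_div_of_nonneg_right (le_nbrSum (srwAvoid_nonneg z m) h) (by norm_num)

/-- Oscillating between the origin and a neighbour `w ≠ z` avoids `z`. -/
lemma srwAvoid_two_mul_zero_ge (hz : z ≠ 0) (m : ℕ) :
    (1 / 16 : ℝ) ^ m ≤ srwAvoid z (2 * m) 0 := by
  obtain ⟨w, hwz, h0w, hw0⟩ : ∃ w, w ≠ z ∧ IsNbr 0 w ∧ IsNbr w 0 := by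
    by_cases h : z = (1, 0)
    · exact ⟨(0, 1), by simp [h], by simp [IsNbr], by simp [IsNbr]⟩
    · exact ⟨(1, 0), Ne.symm h, by simp [IsNbr], by simp [IsNbr]⟩
  induction m with
  | zero => simp [srwAvoid]
  | succ m ih =>
    have hto := srwAvoid_succ_ge hwz hw0 (2 * m)
    have hback := srwAvoid_succ_ge hz.symm h0w (2 * m + 1)
    rw [mul_add, mul_one, pow_succ]
    linarith

lemma srwHit_ge_of_l1Norm_sub (d : ℕ) {y : ℤ × ℤ} {m : ℕ} (h : l1Norm (z - y) = d + 1) :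
    (1 / 4 : ℝ) ^ (d + 1) * srwAvoid z m y ≤ srwHit z (m + (d + 1)) := by
  induction d generalizing y m with
  | zero =>
    obtain ⟨y', hy'y, hy'⟩ := exists_nbr_l1Norm_sub_eq h
    rw [l1Norm_eq_zero, sub_eq_zero] at hy'
    subst hy'
    linarith [srwHit_succ_ge hy'y m]
  | succ d ih =>
    obtain ⟨y', hy'y, hy'⟩ := exists_nbr_l1Norm_sub_eq h
    have hy'z : y' ≠ z := by
      rintro rfl
      simp [l1Norm] at hy'
    calc (1 / 4 : ℝ) ^ (d + 1 + 1) * srwAvoid z m y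
        = (1 / 4 : ℝ) ^ (d + 1) * (srwAvoid z m y / 4) := by ring
      _ ≤ (1 / 4 : ℝ) ^ (d + 1) * srwAvoid z (m + 1) y' := by
        gcongr; exact srwAvoid_succ_ge hy'z hy'y m
      _ ≤ srwHit z (m + 1 + (d + 1)) := ih hy'
      _ = srwHit z (m + (d + 1 + 1)) := by rw [add_assoc, add_comm 1]

lemma srwHit_ge (hz : z ≠ 0) (m : ℕ) :
    (1 / 4 : ℝ) ^ (2 * m + l1Norm z) ≤ srwHit z (2 * m + l1Norm z) := by
  obtain ⟨d, hd⟩ := Nat.exists_eq_succ_of_ne_zero (mt l1Norm_eq_zero.mp hz)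
  have hpath := srwHit_ge_of_l1Norm_sub d (m := 2 * m) (by rwa [sub_zero])
  rw [hd, pow_add, pow_mul]
  calc ((1 / 4 : ℝ) ^ 2) ^ m * (1 / 4) ^ (d + 1)
      ≤ srwAvoid z (2 * m) 0 * (1 / 4) ^ (d + 1) := by
        gcongr; norm_num [srwAvoid_two_mul_zero_ge hz m]
    _ ≤ srwHit z (2 * m + (d + 1)) := by linarith

end LowerBound

section GeometricTail

variable {f : ℕ → ℝ}

lemma summable_ite_lt (hf : ∀ k, 0 ≤ f k) (hs : Summable f) (t : ℝ) :
    Summable fun k : ℕ => if t < k then f k else 0 :=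
  hs.of_nonneg_of_le (fun k => by split_ifs <;> simp [hf]) (fun k => by split_ifs <;> simp [hf])

lemma tsum_ite_lt_le_geometric {r : ℝ} (hf : ∀ k, 0 ≤ f k) (hfr : ∀ k, f k ≤ r ^ k) (hr : r < 1)
    {t : ℝ} (ht : 0 ≤ t) : ∑' k : ℕ, (if t < k then f k else 0) ≤ r ^ (⌊t⌋₊ + 1) / (1 - r) := by
  have hr0 : 0 ≤ r := by simpa using (hf 1).trans (hfr 1)
  have hgeom := summable_geometric_of_lt_one hr0 hr
  set m := ⌊t⌋₊ + 1
  have hsum := summable_ite_lt hf (hgeom.of_nonneg_of_le hf hfr) t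
  have hhead : ∀ k ∈ Finset.range m, (if t < k then f k else 0) = 0 := fun k hk => if_neg <| by
    rw [← Nat.floor_lt ht]
    simp only [Finset.mem_range, m] at hk
    omega
  rw [← hsum.sum_add_tsum_nat_add m, Finset.sum_eq_zero hhead, zero_add]
  calc ∑' j : ℕ, (if t < ↑(j + m) then f (j + m) else 0)
      ≤ ∑' j : ℕ, r ^ m * r ^ j := by
        refine (hsum.comp_injective (add_left_injective m)).tsum_le_tsum (fun j => ?_)
          (hgeom.mul_left _)
        split_ifs
        · rw [← pow_add, add_comm]; exact hfr _
        · positivity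
    _ = r ^ m / (1 - r) := by rw [tsum_mul_left, tsum_geometric_of_lt_one hr0 hr, div_eq_mul_inv]

end GeometricTail

section Laplace

variable {lam : ℝ} {z : ℤ × ℤ}

lemma exp_mul_srwFirstHit_nonneg (hz : z ≠ 0) (k : ℕ) : 0 ≤ exp (-lam * k) * srwFirstHit z k := by
  rw [srwFirstHit_eq_srwHit hz]
  exact mul_nonneg (exp_nonneg _) (srwHit_nonneg z k)

lemma exp_mul_srwFirstHit_le (hz : z ≠ 0) (k : ℕ) :
    exp (-lam * k) * srwFirstHit z k ≤ exp (-lam) ^ k := by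
  rw [srwFirstHit_eq_srwHit hz, mul_comm (-lam), exp_nat_mul]
  exact mul_le_of_le_one_right (by positivity) (srwHit_le_one z k)

lemma summable_exp_mul_srwFirstHit (hz : z ≠ 0) (hlam : 0 < lam) :
    Summable fun k : ℕ => exp (-lam * k) * srwFirstHit z k :=
  (summable_geometric_of_lt_one (exp_nonneg _) (exp_lt_one_iff.mpr (neg_lt_zero.mpr hlam))
    ).of_nonneg_of_le (exp_mul_srwFirstHit_nonneg hz) (exp_mul_srwFirstHit_le hz)

lemma summable_ite_exp_mul_srwFirstHit (hz : z ≠ 0) (hlam : 0 < lam) (t : ℝ) :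
    Summable fun k : ℕ => if t < k then exp (-lam * k) * srwFirstHit z k else 0 :=
  summable_ite_lt (exp_mul_srwFirstHit_nonneg hz) (summable_exp_mul_srwFirstHit hz hlam) t

lemma hitLaplaceTail_le_hitLaplace (hz : z ≠ 0) (hlam : 0 < lam) (ν : ℝ) (n : ℕ) :
    hitLaplaceTail lam ν n z ≤ hitLaplace lam z :=
  (summable_ite_exp_mul_srwFirstHit hz hlam _).tsum_le_tsum
    (fun k => by split_ifs; exacts [le_rfl, exp_mul_srwFirstHit_nonneg hz k])
    (summable_exp_mul_srwFirstHit hz hlam)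

lemma hitLaplaceTail_le (hz : z ≠ 0) (hlam : 0 < lam) {ν : ℝ} (hν : 0 ≤ ν) (n : ℕ) :
    hitLaplaceTail lam ν n z ≤ (1 - exp (-lam))⁻¹ * exp (-(lam * ν) * n) := by
  have hr : exp (-lam) < 1 := exp_lt_one_iff.mpr (neg_lt_zero.mpr hlam)
  have hfloor : ν * n ≤ (⌊ν * n⌋₊ + 1 : ℕ) := by
    push_cast; exact (Nat.lt_floor_add_one _).le
  calc hitLaplaceTail lam ν n z ≤ exp (-lam) ^ (⌊ν * n⌋₊ + 1) / (1 - exp (-lam)) :=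
        tsum_ite_lt_le_geometric (exp_mul_srwFirstHit_nonneg hz) (exp_mul_srwFirstHit_le hz) hr
          (by positivity)
    _ ≤ exp (-(lam * ν) * n) / (1 - exp (-lam)) := by
        have : 0 < 1 - exp (-lam) := sub_pos.mpr hr
        gcongr
        rw [← exp_nat_mul, exp_le_exp]
        nlinarith
    _ = _ := div_eq_inv_mul _ _

lemma exp_le_hitLaplaceTail (hz : z ≠ 0) (hlam : 0 < lam) {ν : ℝ} {n m : ℕ}
    (h : ν * n < (2 * m + l1Norm z : ℕ)) :
    exp (-(lam + log 4) * (2 * m + l1Norm z : ℕ)) ≤ hitLaplaceTail lam ν n z := by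
  set k := 2 * m + l1Norm z
  calc exp (-(lam + log 4) * k) = exp (-lam * k) * (1 / 4) ^ k := by
        rw [neg_add, add_mul, exp_add, mul_comm (-log 4), exp_nat_mul, exp_neg,
          exp_log (by norm_num), one_div]
    _ ≤ exp (-lam * k) * srwFirstHit z k := by
        rw [srwFirstHit_eq_srwHit hz]
        gcongr
        exact srwHit_ge hz m
    _ = if ν * n < k then exp (-lam * k) * srwFirstHit z k else 0 := (if_pos h).symm
    _ ≤ hitLaplaceTail lam ν n z :=
        (summable_ite_exp_mul_srwFirstHit hz hlam _).le_tsum k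
          (fun j _ => by split_ifs; exacts [exp_mul_srwFirstHit_nonneg hz j, le_rfl])

lemma exp_le_hitLaplaceTail_nsmul {x : ℤ × ℤ} (hx : x ≠ 0) (hlam : 0 < lam) (ν : ℝ) {n : ℕ}
    (hn : 0 < n) :
    exp (-(lam + log 4) * (2 * ⌈ν⌉₊ + l1Norm x) * n) ≤ hitLaplaceTail lam ν n (n • x) := by
  have hx1 : (1 : ℝ) ≤ l1Norm x := by
    exact_mod_cast Nat.one_le_iff_ne_zero.mpr (mt l1Norm_eq_zero.mp hx)
  have hn1 : (1 : ℝ) ≤ n := by exact_mod_cast hn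
  have hbound := exp_le_hitLaplaceTail (smul_ne_zero hn.ne' hx) hlam (ν := ν) (n := n)
    (m := n * ⌈ν⌉₊) (by push_cast [l1Norm_nsmul]; nlinarith [Nat.le_ceil ν])
  convert hbound using 2
  push_cast [l1Norm_nsmul]
  ring

end Laplace

section ExponentialRate

variable {a b : ℕ → ℝ} {L c : ℝ}

lemma eventually_le_log_div (hlow : ∀ᶠ n : ℕ in atTop, exp (L * n) ≤ a n) :
    ∀ᶠ n : ℕ in atTop, L ≤ log (a n) / n := by
  filter_upwards [hlow, eventually_gt_atTop 0] with n h hn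
  rwa [le_div_iff₀ (by exact_mod_cast hn), le_log_iff_exp_le ((exp_pos _).trans_le h)]

lemma limsup_log_div_le (hlow : ∀ᶠ n : ℕ in atTop, exp (L * n) ≤ a n)
    (hup : ∀ᶠ n : ℕ in atTop, a n ≤ exp (c * n)) :
    limsup (fun n : ℕ => log (a n) / n) atTop ≤ c := by
  refine limsup_le_of_le
    (isCoboundedUnder_le_of_eventually_le atTop (eventually_le_log_div hlow)) ?_
  filter_upwards [hlow, hup, eventually_gt_atTop 0] with n hl hu hn
  rwa [div_le_iff₀ (by exact_mod_cast hn), log_le_iff_le_exp ((exp_pos _).trans_le hl)]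

lemma eventually_exp_le_of_lt_liminf (hlow : ∀ᶠ n : ℕ in atTop, exp (L * n) ≤ b n)
    (h : c < liminf (fun n : ℕ => log (b n) / n) atTop) :
    ∀ᶠ n : ℕ in atTop, exp (c * n) ≤ b n := by
  filter_upwards [eventually_lt_of_lt_liminf h
      (isBoundedUnder_of_eventually_ge (eventually_le_log_div hlow)), hlow,
    eventually_gt_atTop 0] with n hc hl hn
  rw [lt_div_iff₀ (by exact_mod_cast hn), lt_log_iff_exp_lt ((exp_pos _).trans_le hl)] at hc
  exact hc.le

lemma eventually_mul_exp_le {s : ℝ} (K : ℝ) (h : s < c) :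
    ∀ᶠ n : ℕ in atTop, K * exp (s * n) ≤ exp (c * n) := by
  have hgrow : Tendsto (fun n : ℕ => exp ((c - s) * n)) atTop atTop :=
    tendsto_exp_atTop.comp (tendsto_natCast_atTop_atTop.const_mul_atTop (sub_pos.mpr h))
  filter_upwards [hgrow.eventually_ge_atTop K] with n hn
  calc K * exp (s * n) ≤ exp ((c - s) * n) * exp (s * n) := by gcongr
    _ = exp (c * n) := by rw [← exp_add]; ring_nf

lemma tendsto_div_of_exp_gap {c₁ c₂ : ℝ} (hc : c₁ < c₂) (ha₀ : ∀ᶠ n : ℕ in atTop, 0 ≤ a n)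
    (ha : ∀ᶠ n : ℕ in atTop, a n ≤ exp (c₁ * n)) (hb : ∀ᶠ n : ℕ in atTop, exp (c₂ * n) ≤ b n) :
    Tendsto (fun n => a n / b n) atTop (𝓝 0) := by
  have hgeom : Tendsto (fun n : ℕ => exp (c₁ - c₂) ^ n) atTop (𝓝 0) :=
    tendsto_pow_atTop_nhds_zero_of_lt_one (exp_nonneg _)
      (exp_lt_one_iff.mpr (sub_neg.mpr hc))
  refine squeeze_zero' ?_ ?_ hgeom
  · filter_upwards [ha₀, hb] with n ha₀ hb
    exact div_nonneg ha₀ ((exp_nonneg _).trans hb)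
  · filter_upwards [ha, hb] with n ha hb
    calc a n / b n ≤ exp (c₁ * n) / exp (c₂ * n) := div_le_div₀ (exp_nonneg _) ha (exp_pos _) hb
      _ = exp (c₁ - c₂) ^ n := by rw [← exp_sub, ← sub_mul, mul_comm, exp_nat_mul]

end ExponentialRate

lemma ENNReal.toReal_ofReal_add_ofReal_mul_le {p q : ℝ} (hp : 0 ≤ p) (hq : 0 ≤ q) (I : ℝ≥0∞) :
    (ENNReal.ofReal p + ENNReal.ofReal q * I).toReal ≤ p + q * I.toReal := by
  refine ENNReal.toReal_add_le.trans_eq ?_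
  rw [ENNReal.toReal_mul, ENNReal.toReal_ofReal hp, ENNReal.toReal_ofReal hq]

theorem hitting_time_truncation_general (x : ℤ × ℤ) (hx : x ≠ 0) (lam : ℝ) (hlam : 0 < lam)
    (γ0 : ℝ) (hγ0 : 0 < γ0)
    (A : ℝ≥0∞)
    (hattain : A = ENNReal.ofReal (lam * γ0) +
        ENNReal.ofReal γ0 * cramerI (γ0⁻¹ • (((x.1 : ℝ), (x.2 : ℝ)) : ℝ × ℝ)))
    (ν : ℝ)
    (hν : (γ0 / lam) *
        (lam + (cramerI (γ0⁻¹ • (((x.1 : ℝ), (x.2 : ℝ)) : ℝ × ℝ))).toReal) < ν) :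
    limsup (fun n : ℕ => Real.log (hitLaplaceTail lam ν n (n • x)) / n) atTop
        < -A.toReal ∧
    (-A.toReal ≤ liminf (fun n : ℕ => Real.log (hitLaplace lam (n • x)) / n) atTop →
      Tendsto (fun n : ℕ => hitLaplaceTail lam ν n (n • x) / hitLaplace lam (n • x))
        atTop (nhds 0)) := by
  set I := cramerI (γ0⁻¹ • (((x.1 : ℝ), (x.2 : ℝ)) : ℝ × ℝ))
  have hrate : A.toReal < lam * ν := calc
    A.toReal ≤ lam * γ0 + γ0 * I.toReal :=
      hattain ▸ ENNReal.toReal_ofReal_add_ofReal_mul_le (by positivity) hγ0.le I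
    _ = lam * (γ0 / lam * (lam + I.toReal)) := by field_simp
    _ < lam * ν := mul_lt_mul_of_pos_left hν hlam
  have hν₀ : 0 ≤ ν := (pos_of_mul_pos_right (ENNReal.toReal_nonneg.trans_lt hrate) hlam.le).le
  obtain ⟨c₁, hνc₁, hc₁A⟩ := exists_between (neg_lt_neg hrate)
  obtain ⟨c₂, hc₁₂, hc₂A⟩ := exists_between hc₁A
  have hnx : ∀ᶠ n : ℕ in atTop, n • x ≠ 0 :=
    (eventually_gt_atTop 0).mono fun n hn => smul_ne_zero hn.ne' hx
  have hlow : ∀ᶠ n : ℕ in atTop, exp (-(lam + log 4) * (2 * ⌈ν⌉₊ + l1Norm x) * n) ≤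
      hitLaplaceTail lam ν n (n • x) :=
    (eventually_gt_atTop 0).mono fun n hn => exp_le_hitLaplaceTail_nsmul hx hlam ν hn
  have hup : ∀ᶠ n : ℕ in atTop, hitLaplaceTail lam ν n (n • x) ≤ exp (c₁ * n) := by
    filter_upwards [hnx, eventually_mul_exp_le _ hνc₁] with n hn hK
    exact (hitLaplaceTail_le hn hlam hν₀ n).trans (by simpa only [neg_mul] using hK)
  have htotal : ∀ᶠ n : ℕ in atTop, hitLaplaceTail lam ν n (n • x) ≤ hitLaplace lam (n • x) :=
    hnx.mono fun n hn => hitLaplaceTail_le_hitLaplace hn hlam ν n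
  refine ⟨(limsup_log_div_le hlow hup).trans_lt hc₁A, fun hliminf => ?_⟩
  exact tendsto_div_of_exp_gap hc₁₂ (hlow.mono fun n h => (exp_nonneg _).trans h) hup
    (eventually_exp_le_of_lt_liminf ((hlow.and htotal).mono fun n h => h.1.trans h.2)
      (hc₂A.trans_le hliminf))

/-- Truncation lemma for the Laplace transform of hitting times: if
`A = inf_{γ>0}(λγ + γ I(x/γ))` is attained at `γ₀ ∈ (0,∞)` (with `I(x/γ₀) < ∞`)
then for `ν > (γ₀/λ)(λ + I(x/γ₀))`,
`limsup (1/n) log E[e^{-λH(nx)}; H(nx) > νn] < -A`; consequently, provided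
`liminf (1/n) log E[e^{-λH(nx)}] ≥ -A`, the ratio
`E[e^{-λH(nx)}; H(nx) > νn] / E[e^{-λH(nx)}]` tends to `0`. -/
theorem hitting_time_truncation (x : ℤ × ℤ) (hx : x ≠ 0) (lam : ℝ) (hlam : 0 < lam)
    (γ0 : ℝ) (hγ0 : 0 < γ0)
    (hfin : cramerI (γ0⁻¹ • (((x.1 : ℝ), (x.2 : ℝ)) : ℝ × ℝ)) ≠ ⊤)
    (A : ℝ≥0∞)
    (hA : A = ⨅ γ ∈ Set.Ioi (0 : ℝ),
      (ENNReal.ofReal (lam * γ) +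
        ENNReal.ofReal γ * cramerI (γ⁻¹ • (((x.1 : ℝ), (x.2 : ℝ)) : ℝ × ℝ))))
    (hattain : A = ENNReal.ofReal (lam * γ0) +
        ENNReal.ofReal γ0 * cramerI (γ0⁻¹ • (((x.1 : ℝ), (x.2 : ℝ)) : ℝ × ℝ)))
    (ν : ℝ)
    (hν : (γ0 / lam) *
        (lam + (cramerI (γ0⁻¹ • (((x.1 : ℝ), (x.2 : ℝ)) : ℝ × ℝ))).toReal) < ν) :
    limsup (fun n : ℕ => Real.log (hitLaplaceTail lam ν n (n • x)) / n) atTop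
        < -A.toReal ∧
    (-A.toReal ≤ liminf (fun n : ℕ => Real.log (hitLaplace lam (n • x)) / n) atTop →
      Tendsto (fun n : ℕ => hitLaplaceTail lam ν n (n • x) / hitLaplace lam (n • x))
        atTop (nhds 0)) :=
  hitting_time_truncation_general x hx lam hlam γ0 hγ0 A hattain ν hν
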